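/- arXiv:1207.1607 — 2 statements merged into one kernel-verified Lean document; each statement's English description precedes it below -/
import Mathlib

section
/- If q ∈ ℕ is not a perfect square, then ∑_{p ∈ (ℤ/qℤ)^×} ε_p (q/p) = 0, where the sum is over odd representatives p of units mod q (for 4 | q all units are odd), ε_p = 1 if p ≡ 1 mod 4, ε_p = i if p ≡ 3 mod 4, and (q/p) is the Jacobi symbol. Assume q ≡ 0 mod 4. -/
/-!
For `4 ∣ q` the symbol `J(q | ·)` on odd numbers is periodic modulo `q`, and `ε_p` depends only
on `p mod 4`. As `q` is not a square, some prime `ℓ` divides `q` to an odd power, and the Chinese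
remainder theorem yields `r ≡ 1 mod 4` with `J(q | r) = -1`. Multiplication by `r` permutes
`(ℤ/q)ˣ`, fixes `ε` and flips the sign of `J(q | ·)`, so the sum is its own negative.
-/

open scoped NumberTheorySymbols

theorem Nat.exists_prime_odd_factorization_of_not_isSquare {n : ℕ} (hn : ¬IsSquare n) :
    ∃ p : ℕ, p.Prime ∧ Odd (n.factorization p) := by
  have hn0 : n ≠ 0 := by rintro rfl; exact hn ⟨0, rfl⟩
  by_contra! h
  refine hn ⟨n.factorization.prod fun p k => p ^ (k / 2), ?_⟩
  conv_lhs => rw [← Nat.prod_factorization_pow_eq_self hn0]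
  rw [← Finsupp.prod_mul]
  refine Finsupp.prod_congr fun p hp => ?_
  obtain ⟨c, hc⟩ := Nat.not_odd_iff_even.mp (h p (Nat.prime_of_mem_primeFactors hp))
  rw [← pow_add, hc]
  congr 1
  omega

namespace jacobiSym

theorem mod_right_of_four_dvd {a b : ℕ} (ha : 4 ∣ a) (hb : Odd b) :
    J(a | b % a) = J(a | b) := by
  obtain ⟨k, rfl⟩ := ha
  have hb' : Odd (b % (4 * k)) := hb.mod_even (Even.mul_right (by decide) _)
  push_cast
  rw [mul_left, mul_left, at_four hb, at_four hb', ← mod_right' k hb]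

theorem coprime_of_ne_zero {a b : ℕ} (hb : b ≠ 0) (h : J(a | b) ≠ 0) : a.Coprime b := by
  simpa [Int.gcd_natCast_natCast, hb] using mt eq_zero_iff.mpr h

/-- For `ℓ = 2` take `b ≡ 5 mod 8`, `b ≡ 1 mod n`; for odd `ℓ` take `b` a non-residue mod `ℓ` with
`b ≡ 1 mod 4n` and use reciprocity. -/
theorem exists_mod_four_mul_eq_one_prime_eq_neg_one {ℓ n : ℕ} (hℓ : ℓ.Prime) (hn : ¬ℓ ∣ n) :
    ∃ b, b % (4 * n) = 1 ∧ J(ℓ | b) = -1 := by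
  have h4n : 1 < 4 * n := by
    have : n ≠ 0 := by rintro rfl; exact hn (dvd_zero ℓ)
    omega
  rcases eq_or_ne ℓ 2 with rfl | hℓ2
  · have hnodd : Odd n := Nat.odd_iff.mpr (Nat.two_dvd_ne_zero.mp hn)
    obtain ⟨b, hb8, hbn⟩ :=
      Nat.chineseRemainder (Nat.Coprime.pow_left 3 hnodd.coprime_two_left) 5 1
    have hb4 : b ≡ 1 [MOD 4] := by
      unfold Nat.ModEq at hb8 ⊢
      omega
    have hb : b ≡ 1 [MOD 4 * n] :=
      (Nat.modEq_and_modEq_iff_modEq_mul (Nat.Coprime.pow_left 2 hnodd.coprime_two_left)).mp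
        ⟨hb4, hbn⟩
    refine ⟨b, Eq.trans hb (Nat.mod_eq_of_lt h4n), ?_⟩
    have hbodd : Odd b := Nat.odd_iff.mpr (by unfold Nat.ModEq at hb4; omega)
    rw [Nat.cast_ofNat, at_two hbodd, ZMod.χ₈_nat_mod_eight, hb8]
    decide
  · have := Fact.mk hℓ
    have hℓodd := hℓ.odd_of_ne_two hℓ2
    obtain ⟨c, hc⟩ := FiniteField.exists_nonsquare (F := ZMod ℓ) (by rwa [ZMod.ringChar_zmod_n])
    have hcop : ℓ.Coprime (4 * n) :=
      Nat.Coprime.mul_right (Nat.Coprime.pow_right 2 (Nat.coprime_two_right.mpr hℓodd))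
        (hℓ.coprime_iff_not_dvd.mpr hn)
    obtain ⟨b, hbℓ, hb⟩ := Nat.chineseRemainder hcop c.val 1
    have hb4 : b % 4 = 1 := by
      rw [← Nat.mod_mod_of_dvd b (dvd_mul_right 4 n), hb, Nat.mod_eq_of_lt h4n]
    refine ⟨b, Eq.trans hb (Nat.mod_eq_of_lt h4n), ?_⟩
    rw [quadratic_reciprocity_one_mod_four' hℓodd hb4, ZMod.nonsquare_iff_jacobiSym_eq_neg_one,
      Int.cast_natCast, (ZMod.natCast_eq_natCast_iff _ _ _).mpr hbℓ, ZMod.natCast_zmod_val]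
    exact hc

theorem exists_mod_four_eq_one_eq_neg_one_of_not_isSquare {q : ℕ} (hq : ¬IsSquare q) :
    ∃ b, b % 4 = 1 ∧ J(q | b) = -1 := by
  obtain ⟨ℓ, hℓ, hv⟩ := Nat.exists_prime_odd_factorization_of_not_isSquare hq
  have hq0 : q ≠ 0 := by rintro rfl; exact hq ⟨0, rfl⟩
  have hsplit := Nat.ordProj_mul_ordCompl_eq_self q ℓ
  have hndvd := Nat.not_dvd_ordCompl hℓ hq0
  generalize ordCompl[ℓ] q = n at hsplit hndvd
  obtain ⟨b, hb, hbℓ⟩ := exists_mod_four_mul_eq_one_prime_eq_neg_one hℓ hndvd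
  have hb4 : b % 4 = 1 := by rw [← Nat.mod_mod_of_dvd b (dvd_mul_right 4 n), hb]
  refine ⟨b, hb4, ?_⟩
  rw [← hsplit, Nat.cast_mul, Nat.cast_pow, mul_left, pow_left, hbℓ, hv.neg_one_pow,
    mod_right' n (Nat.odd_iff.mpr (by omega)), hb, one_right, mul_one]

end jacobiSym

theorem ZMod.val_natCast_mul {n : ℕ} (a : ℕ) (x : ZMod n) :
    ((a : ZMod n) * x).val = a * x.val % n := by
  rw [ZMod.val_mul, ZMod.val_natCast, Nat.mod_mul_mod]

theorem Fintype.sum_eq_zero_of_mul_left_eq_neg {G R : Type*} [Group G] [Fintype G] [Ring R]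
    [NoZeroDivisors R] [CharZero R] {f : G → R} (g : G) (hf : ∀ x, f (g * x) = -f x) :
    ∑ x, f x = 0 := by
  have h := Equiv.sum_comp (Equiv.mulLeft g) f
  simp only [Equiv.coe_mulLeft, hf, Finset.sum_neg_distrib] at h
  exact CharZero.neg_eq_self_iff.mp h

/-- If `q ≡ 0 mod 4` is not a square, then `∑_{p ∈ (ℤ/q)ˣ} ε_p (q/p) = 0`. -/
theorem stmt_10 (q : ℕ) [NeZero q] (hq : q % 4 = 0) (hsq : ¬ IsSquare q) :
    ∑ p : (ZMod q)ˣ,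
        (if ((p : ZMod q).val % 4 = 1) then (1 : ℂ) else Complex.I) *
          (jacobiSym (q : ℤ) ((p : ZMod q).val) : ℂ)
      = 0 := by
  obtain ⟨b, hb4, hbJ⟩ := jacobiSym.exists_mod_four_eq_one_eq_neg_one_of_not_isSquare hsq
  have h4 : 4 ∣ q := Nat.dvd_of_mod_eq_zero hq
  have hb : Odd b := Nat.odd_iff.mpr (by omega)
  have hcop : b.Coprime q := by
    refine (jacobiSym.coprime_of_ne_zero (by omega) ?_).symm
    rw [hbJ]
    decide
  refine Fintype.sum_eq_zero_of_mul_left_eq_neg (ZMod.unitOfCoprime b hcop) fun p => ?_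
  have hx : Odd (p : ZMod q).val :=
    ((ZMod.val_coe_unit_coprime p).coprime_dvd_right ((dvd_mul_right 2 2).trans h4)).odd_of_right
  have : NeZero b := ⟨by omega⟩
  have : NeZero (p : ZMod q).val := ⟨hx.pos.ne'⟩
  rw [Units.val_mul, ZMod.coe_unitOfCoprime, ZMod.val_natCast_mul, Nat.mod_mod_of_dvd _ h4,
    jacobiSym.mod_right_of_four_dvd h4 (hb.mul hx), Nat.mul_mod, hb4, one_mul, Nat.mod_mod,
    jacobiSym.mul_right, hbJ]
  push_cast
  ring
end

section
/- Let q ≡ 2 mod 4 with gcd(p,q) = 1, and φ : ℝ → ℂ be 1-periodic with Fourier coefficients φ̂_k satisfying ∑_k k²|φ̂_k| < ∞. Then g_φ(p,q) = 2 g_1(2p, q/2) · G_φ^-(-\overline{8p}/(q/2)), where G_φ^-(x) = ∑_{n odd} φ̂_n e^{2πi n² x} and \overline{8p} is the inverse of 8p modulo q/2. -/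
open Finset Complex Real
open ZMod (stdAddChar)

/-!
Write `q = 2m` with `m` odd (so `p` is odd) and `e_N(x) = exp(2πi x / N)`. Expanding `φ` in its
Fourier series gives `g_φ(p, q) = ∑_k c_k S(k)` with `S(k) = ∑_{h mod 2m} e_{2m}(p h² + k h)`.
Shifting `h` by `m` multiplies every term of `S(k)` by `(-1)^(pm + k)`, so `S(k) = 0` for even `k`.
For odd `k` each term depends only on `h mod m`, and the substitution `h = 2b` gives
`S(k) = 2 ∑_{b mod m} e_m(2p b² + k b)`; completing the square with `8pw ≡ 1 (mod m)` turns this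
into `2 e_m(-w k²) g_1(2p, m)`.
-/

lemma ZMod.sum_range_natCast {M : Type*} [AddCommMonoid M] (N : ℕ) [NeZero N] (f : ZMod N → M) :
    ∑ h ∈ range N, f h = ∑ x, f x :=
  sum_nbij' (↑) ZMod.val (fun _ _ => mem_univ _) (fun x _ => mem_range.2 x.val_lt)
    (fun _ hh => ZMod.val_natCast_of_lt (mem_range.1 hh)) (fun x _ => ZMod.natCast_zmod_val x)
    (fun _ _ => rfl)

lemma Finset.sum_range_two_mul_of_add {M : Type*} [Semiring M] (f : ℕ → M) (m : ℕ) (ε : M)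
    (hf : ∀ h, f (m + h) = ε * f h) :
    ∑ h ∈ range (2 * m), f h = (1 + ε) * ∑ h ∈ range m, f h := by
  rw [two_mul, sum_range_add, add_mul, one_mul, mul_sum]
  simp only [hf]

lemma AddChar.sum_mul_sq_add_mul {R M : Type*} [CommRing R] [Fintype R] [CommSemiring M]
    (ψ : AddChar R M) {a u : R} (hau : 4 * a * u = 1) (b : R) :
    ∑ x, ψ (a * x ^ 2 + b * x) = ψ (-(u * b ^ 2)) * ∑ x, ψ (a * x ^ 2) := by
  rw [mul_sum]
  refine Fintype.sum_equiv (Equiv.addRight (2 * u * b)) _ _ fun x => ?_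
  rw [← AddChar.map_add_eq_mul, Equiv.coe_addRight]
  congr 1
  linear_combination (-(b * x + u * b ^ 2)) * hau

lemma Int.odd_of_gcd_eq_one {p n : ℤ} (hn : Even n) (h : Int.gcd p n = 1) : Odd p := by
  refine Int.not_even_iff_odd.1 fun hp => ?_
  have h2 := Int.dvd_coe_gcd (even_iff_two_dvd.1 hp) (even_iff_two_dvd.1 hn)
  rw [h] at h2
  norm_num at h2

lemma ZMod.stdAddChar_two_mul_intCast (m : ℕ) [NeZero m] (n : ℤ) :
    stdAddChar ((2 * n : ℤ) : ZMod (2 * m)) = stdAddChar (n : ZMod m) := by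
  have : (m : ℂ) ≠ 0 := Nat.cast_ne_zero.2 (NeZero.ne m)
  simp only [ZMod.stdAddChar_coe]
  congr 1
  push_cast
  field_simp

lemma ZMod.stdAddChar_natCast_mul_intCast (m : ℕ) [NeZero m] (n : ℤ) :
    stdAddChar ((m * n : ℤ) : ZMod (2 * m)) = (-1) ^ n := by
  have : (m : ℂ) ≠ 0 := Nat.cast_ne_zero.2 (NeZero.ne m)
  rw [ZMod.stdAddChar_coe, ← exp_pi_mul_I, ← exp_int_mul]
  congr 1
  push_cast
  field_simp

lemma ZMod.sum_stdAddChar_mul_sq (m : ℕ) [NeZero m] (a : ℤ) :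
    ∑ x : ZMod m, stdAddChar ((a : ZMod m) * x ^ 2) =
      ∑ h ∈ range m, cexp (2 * π * I * a * h ^ 2 / m) := by
  rw [← ZMod.sum_range_natCast]
  refine sum_congr rfl fun h _ => ?_
  rw [show (a : ZMod m) * (h : ZMod m) ^ 2 = ((a * h ^ 2 : ℤ) : ZMod m) by push_cast; rfl,
    ZMod.stdAddChar_coe]
  push_cast
  ring_nf

noncomputable def quadExpSum (N : ℕ) [NeZero N] (a b : ℤ) : ℂ :=
  ∑ h ∈ range N, stdAddChar ((a * h ^ 2 + b * h : ℤ) : ZMod N)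

section HalfModulus

variable {m : ℕ} [NeZero m] {a b : ℤ}

lemma quadExpSum_two_mul_eq_zero (hm : Odd m) (ha : Odd a) (hb : Even b) :
    quadExpSum (2 * m) a b = 0 := by
  have shift (h : ℕ) : stdAddChar ((a * (m + h : ℕ) ^ 2 + b * (m + h : ℕ) : ℤ) : ZMod (2 * m)) =
      -1 * stdAddChar ((a * h ^ 2 + b * h : ℤ) : ZMod (2 * m)) := by
    have hodd : Odd (2 * a * h + a * m + b) := by
      rw [mul_assoc]
      exact ((even_two_mul _).add_odd (ha.mul (Int.odd_coe_nat m |>.2 hm))).add_even hb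
    rw [show a * ((m + h : ℕ) : ℤ) ^ 2 + b * (m + h : ℕ) =
        m * (2 * a * h + a * m + b) + (a * h ^ 2 + b * h) by push_cast; ring,
      Int.cast_add, AddChar.map_add_eq_mul, ZMod.stdAddChar_natCast_mul_intCast, hodd.neg_one_zpow]
  rw [quadExpSum, sum_range_two_mul_of_add _ m _ shift, add_neg_cancel, zero_mul]

lemma quadExpSum_two_mul_of_odd (hm : Odd m) (ha : Odd a) (hb : Odd b) :
    quadExpSum (2 * m) a b =
      2 * ∑ x : ZMod m, stdAddChar (2 * (a : ZMod m) * x ^ 2 + (b : ZMod m) * x) := by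
  obtain ⟨u, hu⟩ : ∃ u : ZMod m, 2 * u = 1 :=
    ⟨((m + 1) / 2 : ℕ), by
      rw [← Nat.cast_two, ← Nat.cast_mul, Nat.mul_div_cancel' hm.add_one.two_dvd,
        Nat.cast_add_one, ZMod.natCast_self, zero_add]⟩
  set g : ZMod m → ℂ := fun y => stdAddChar (u * ((a : ZMod m) * y ^ 2 + (b : ZMod m) * y))
  have reduce (h : ℕ) : stdAddChar ((a * h ^ 2 + b * h : ℤ) : ZMod (2 * m)) = g h := by
    obtain ⟨t, ht⟩ : Even (a * h ^ 2 + b * h) := by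
      simp [Int.even_add, Int.even_mul, Int.even_pow, Int.not_even_iff_odd.2 ha,
        Int.not_even_iff_odd.2 hb]
    have htm : ((a * h ^ 2 + b * h : ℤ) : ZMod m) = t + t := by
      exact_mod_cast congrArg (Int.cast (R := ZMod m)) ht
    rw [ht, ← two_mul, ZMod.stdAddChar_two_mul_intCast]
    congr 1
    push_cast at htm
    linear_combination (-t) * hu - u * htm
  have periodic (h : ℕ) : g ((m + h : ℕ) : ZMod m) = 1 * g h := by
    rw [Nat.cast_add, ZMod.natCast_self, zero_add, one_mul]
  rw [quadExpSum]
  simp only [reduce]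
  rw [sum_range_two_mul_of_add (fun h => g h) m 1 periodic, one_add_one_eq_two,
    ZMod.sum_range_natCast m g, ← Equiv.sum_comp (Units.mulLeft (Units.mkOfMulEqOne 2 u hu))]
  congr 1
  refine sum_congr rfl fun x _ => ?_
  simp only [g, Units.mulLeft_apply, Units.val_mkOfMulEqOne]
  congr 1
  linear_combination (2 * a * x ^ 2 + b * x) * hu

end HalfModulus

lemma sum_range_mul_exp_eq_tsum_quadExpSum (N : ℕ) [NeZero N] (p : ℤ) {φ : ℝ → ℂ} {c : ℤ → ℂ}
    (hφ : ∀ x : ℝ, HasSum (fun k : ℤ => c k * cexp (2 * π * I * k * x)) (φ x)) :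
    ∑ h ∈ range N, φ (h / N) * cexp (2 * π * I * p * h ^ 2 / N) =
      ∑' k, c k * quadExpSum N p k := by
  have hN : (N : ℂ) ≠ 0 := Nat.cast_ne_zero.2 (NeZero.ne N)
  have term (h : ℕ) : HasSum (fun k => c k * stdAddChar ((p * h ^ 2 + k * h : ℤ) : ZMod N))
      (φ (h / N) * cexp (2 * π * I * p * h ^ 2 / N)) := by
    have split (k : ℤ) : c k * stdAddChar ((p * h ^ 2 + k * h : ℤ) : ZMod N) =
        c k * cexp (2 * π * I * k * (h / N : ℝ)) * cexp (2 * π * I * p * h ^ 2 / N) := by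
      rw [ZMod.stdAddChar_coe, mul_assoc (c k), ← Complex.exp_add]
      congr 2
      push_cast
      field_simp
      ring
    simpa only [split] using (hφ (h / N)).mul_right (cexp (2 * π * I * p * h ^ 2 / N))
  simp only [quadExpSum, mul_sum]
  rw [Summable.tsum_finsetSum fun h _ => (term h).summable]
  exact sum_congr rfl fun h _ => (term h).tsum_eq.symm

lemma tsum_int_eq_tsum_odd {M : Type*} [AddCommMonoid M] [TopologicalSpace M] {f : ℤ → M}
    (hf : ∀ k, Even k → f k = 0) : ∑' k, f k = ∑' n, f (2 * n + 1) := by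
  refine (Function.Injective.tsum_eq (fun a b hab => by omega) fun k hk => ?_).symm
  obtain ⟨n, rfl⟩ := Int.not_even_iff_odd.1 fun he => hk (hf k he)
  exact ⟨n, rfl⟩

theorem stmt_15_general (q : ℕ) (hq : q % 4 = 2) (p : ℤ)
    (hp : Int.gcd p (q : ℤ) = 1)
    (w : ℤ) (hw : 8 * p * w ≡ 1 [ZMOD ((q / 2 : ℕ) : ℤ)])
    (φ : ℝ → ℂ) (c : ℤ → ℂ)
    (hφ : ∀ x : ℝ, HasSum (fun k : ℤ => c k * Complex.exp (2 * Real.pi * Complex.I * (k : ℂ) * (x : ℂ))) (φ x)) :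
    ∑ h ∈ Finset.range q, φ ((h : ℝ) / q) *
        Complex.exp (2 * Real.pi * Complex.I * (p : ℂ) * (h : ℂ) ^ 2 / q)
      = 2 * (∑ h ∈ Finset.range (q / 2),
            Complex.exp (2 * Real.pi * Complex.I * (2 * (p : ℂ)) * (h : ℂ) ^ 2 / ((q / 2 : ℕ) : ℂ))) *
          ∑' n : ℤ, c (2 * n + 1) *
            Complex.exp (2 * Real.pi * Complex.I * ((2 * n + 1 : ℤ) : ℂ) ^ 2 *
              (-(w : ℂ) / ((q / 2 : ℕ) : ℂ))) := by
  obtain ⟨m, rfl⟩ : ∃ m, q = 2 * m := ⟨q / 2, by omega⟩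
  have hm : Odd m := Nat.odd_iff.2 (by omega)
  have : NeZero m := ⟨by omega⟩
  rw [show 2 * m / 2 = m by omega] at hw ⊢
  have hp_odd : Odd p := Int.odd_of_gcd_eq_one (by push_cast; exact even_two_mul _) hp
  have hpw : 4 * (2 * (p : ZMod m)) * w = 1 := by
    have h8 := (ZMod.intCast_eq_intCast_iff _ _ _).2 hw
    push_cast at h8
    linear_combination h8
  have gauss := ZMod.sum_stdAddChar_mul_sq m (2 * p)
  push_cast at gauss
  rw [sum_range_mul_exp_eq_tsum_quadExpSum _ _ hφ,
    tsum_int_eq_tsum_odd fun k hk => by rw [quadExpSum_two_mul_eq_zero hm hp_odd hk, mul_zero],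
    ← gauss, ← tsum_mul_left]
  refine tsum_congr fun n => ?_
  rw [quadExpSum_two_mul_of_odd hm hp_odd (odd_two_mul_add_one n),
    AddChar.sum_mul_sq_add_mul _ hpw,
    show -((w : ZMod m) * ((2 * n + 1 : ℤ) : ZMod m) ^ 2) =
      ((-(w * (2 * n + 1) ^ 2) : ℤ) : ZMod m) by push_cast; ring,
    ZMod.stdAddChar_coe, show 2 * π * I * ((-(w * (2 * n + 1) ^ 2) : ℤ) : ℂ) / m =
      2 * π * I * ((2 * n + 1 : ℤ) : ℂ) ^ 2 * (-(w : ℂ) / m) by push_cast; ring]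
  ring

/-- Functional equation for `q ≡ 2 mod 4`:
`g_φ(p,q) = 2 g₁(2p, q/2) · G_φ⁻(-(8p)⁻¹/(q/2))`. -/
theorem stmt_15 (q : ℕ) (hq : q % 4 = 2) (p : ℤ)
    (hp : Int.gcd p (q : ℤ) = 1)
    (w : ℤ) (hw : 8 * p * w ≡ 1 [ZMOD ((q / 2 : ℕ) : ℤ)])
    (φ : ℝ → ℂ) (c : ℤ → ℂ)
    (hc : Summable fun k : ℤ => (k : ℝ) ^ 2 * ‖c k‖)
    (hφ : ∀ x : ℝ, HasSum (fun k : ℤ => c k * Complex.exp (2 * Real.pi * Complex.I * (k : ℂ) * (x : ℂ))) (φ x)) :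
    ∑ h ∈ Finset.range q, φ ((h : ℝ) / q) *
        Complex.exp (2 * Real.pi * Complex.I * (p : ℂ) * (h : ℂ) ^ 2 / q)
      = 2 * (∑ h ∈ Finset.range (q / 2),
            Complex.exp (2 * Real.pi * Complex.I * (2 * (p : ℂ)) * (h : ℂ) ^ 2 / ((q / 2 : ℕ) : ℂ))) *
          ∑' n : ℤ, c (2 * n + 1) *
            Complex.exp (2 * Real.pi * Complex.I * ((2 * n + 1 : ℤ) : ℂ) ^ 2 *
              (-(w : ℂ) / ((q / 2 : ℕ) : ℂ))) :=
  stmt_15_general q hq p hp w hw φ c hφ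
end
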